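/- Let n ≥ 2 and let A be an n×n real Higham² matrix with P = D = I, i.e. A = [[L̂, 0],[−𝟏ᵀ, 1]]·[[Û, u],[0, 2^{n−1}]] where L̂ is the (n−1)×(n−1) lower unitriangular matrix with all strictly lower entries −1, Û is an invertible (n−1)×(n−1) upper triangular matrix, u = (1, 2, 4, …, 2^{n−2})ᵀ, and 𝟏 is the all-ones vector. Fix ε ∈ ℝ. Then: (a) for i < n, if A + ε·e_i e_nᵀ admits an LU factorization, its last pivot equals 2^{n−1}·(1 + ε·2^{−i}); (b) for j < n, if A + ε·e_n e_jᵀ admits an LU factorization, its last pivot equals 2^{n−1}·(1 − ε·Σ_{ℓ=1}^{n−j} 2^{−ℓ}·(Û⁻¹)_{j,n−ℓ}); (c) if A + ε·e_n e_nᵀ admits an LU factorization, its last pivot equals 2^{n−1} + ε. -/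

import Mathlib

open Matrix

/-- `M` is lower triangular with all diagonal entries equal to `1`. -/
def IsLowerUnitri {k : ℕ} (M : Matrix (Fin k) (Fin k) ℝ) : Prop :=
  (∀ i, M i i = 1) ∧ ∀ i j : Fin k, i < j → M i j = 0

/-- `M` is upper triangular. -/
def IsUpperTri {k : ℕ} (M : Matrix (Fin k) (Fin k) ℝ) : Prop :=
  ∀ i j : Fin k, j < i → M i j = 0

/-- The `m × m` lower unitriangular matrix with all strictly lower entries `-1`. -/
def highamLhat (m : ℕ) : Matrix (Fin m) (Fin m) ℝ :=
  Matrix.of fun i j => if j < i then -1 else if i = j then 1 else 0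

/-- The Higham² matrix with `P = D = I` determined by the invertible upper triangular
matrix `Û`, i.e. `A = [[L̂, 0],[-𝟏ᵀ, 1]] * [[Û, u],[0, 2^(n-1)]]` with
`u = (1, 2, …, 2^(n-2))ᵀ`, viewed as an `n × n = (m+1) × (m+1)` matrix. -/
noncomputable def highamA {m : ℕ} (Uhat : Matrix (Fin m) (Fin m) ℝ) :
    Matrix (Fin (m + 1)) (Fin (m + 1)) ℝ :=
  Matrix.reindex finSumFinEquiv finSumFinEquiv
    (Matrix.fromBlocks (highamLhat m) 0 (Matrix.of fun (_ : Fin 1) (_ : Fin m) => (-1 : ℝ))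
        (Matrix.of fun (_ : Fin 1) (_ : Fin 1) => (1 : ℝ)) *
      Matrix.fromBlocks Uhat (Matrix.of fun (k : Fin m) (_ : Fin 1) => (2 : ℝ) ^ (k : ℕ)) 0
        (Matrix.of fun (_ : Fin 1) (_ : Fin 1) => (2 : ℝ) ^ m))

/- ### auxiliary lemmas -/

lemma pivot_unique {m : ℕ} (M L' U' : Matrix (Fin (m+1)) (Fin (m+1)) ℝ)
    (hL : IsLowerUnitri L') (hU : IsUpperTri U') (h : M = L' * U') :
    M.det = (M.submatrix Fin.castSucc Fin.castSucc).det * U' (Fin.last m) (Fin.last m) := by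
  have hLtri : L'.BlockTriangular OrderDual.toDual := fun i j hij => hL.2 i j hij
  have hUtri : U'.BlockTriangular id := fun i j hij => hU i j hij
  have hdetL : L'.det = 1 := by
    rw [Matrix.det_of_lowerTriangular L' hLtri]
    simp [hL.1]
  have hsub : M.submatrix Fin.castSucc Fin.castSucc =
      (L'.submatrix Fin.castSucc Fin.castSucc) * (U'.submatrix Fin.castSucc Fin.castSucc) := by
    ext i k
    simp only [Matrix.submatrix_apply, h, Matrix.mul_apply]
    rw [Fin.sum_univ_castSucc]
    have : L' i.castSucc (Fin.last m) = 0 := hL.2 _ _ (Fin.castSucc_lt_last i)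
    simp [this]
  have hLs : (L'.submatrix Fin.castSucc Fin.castSucc).BlockTriangular OrderDual.toDual :=
    fun i j hij => hL.2 _ _ (by
      simp only [OrderDual.toDual_lt_toDual] at hij
      exact Fin.castSucc_lt_castSucc_iff.mpr hij)
  have hUs : (U'.submatrix Fin.castSucc Fin.castSucc).BlockTriangular id :=
    fun i j hij => hU _ _ (Fin.castSucc_lt_castSucc_iff.mpr hij)
  have hdetLs : (L'.submatrix Fin.castSucc Fin.castSucc).det = 1 := by
    rw [Matrix.det_of_lowerTriangular _ hLs]
    simp [hL.1]
  rw [hsub, Matrix.det_mul, hdetLs, one_mul, Matrix.det_of_upperTriangular hUs,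
    h, Matrix.det_mul, hdetL, one_mul, Matrix.det_of_upperTriangular hUtri,
    Fin.prod_univ_castSucc]
  simp

/-- entries of the `i`-th column of `L̂⁻¹`, as a function on `ℕ`. -/
noncomputable def vv (i : ℕ) : ℕ → ℝ :=
  fun k => if k < i then 0 else if k = i then 1 else 2 ^ (k - i - 1)

lemma vv_sum (i r : ℕ) :
    ∑ k ∈ Finset.range r, vv i k = if r ≤ i then 0 else 2 ^ (r - i - 1) := by
  induction r with
  | zero => simp
  | succ r ih =>
    rw [Finset.sum_range_succ, ih]
    by_cases h1 : r + 1 ≤ i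
    · rw [if_pos (by omega : r ≤ i), if_pos h1]
      simp only [vv]
      rw [if_pos (by omega : r < i)]
      ring
    · rw [if_neg h1]
      by_cases h2 : r ≤ i
      · have hri : r = i := by omega
        subst hri
        rw [if_pos le_rfl]
        have h0 : r + 1 - r - 1 = 0 := by omega
        rw [h0]
        simp [vv]
      · rw [if_neg h2]
        simp only [vv]
        rw [if_neg (by omega), if_neg (by omega)]
        have he : r + 1 - i - 1 = (r - i - 1) + 1 := by omega
        rw [he, pow_succ]
        ring

lemma sum_range_ite (f : ℕ → ℝ) {r n : ℕ} (h : r ≤ n) :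
    (∑ t ∈ Finset.range n, if t < r then f t else 0) = ∑ t ∈ Finset.range r, f t := by
  rw [← Finset.sum_filter]
  congr 1
  ext t
  simp only [Finset.mem_filter, Finset.mem_range]
  omega

lemma lhat_tri (m : ℕ) : (highamLhat m).BlockTriangular OrderDual.toDual := by
  intro i j hij
  simp only [OrderDual.toDual_lt_toDual] at hij
  simp only [highamLhat, Matrix.of_apply]
  rw [if_neg (by exact fun h => absurd (h.trans hij) (lt_irrefl _)), if_neg hij.ne]

lemma det_lhat (m : ℕ) : (highamLhat m).det = 1 := by
  rw [Matrix.det_of_lowerTriangular _ (lhat_tri m)]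
  simp [highamLhat]

lemma lhat_sum_lt (m : ℕ) (r : Fin m) (g : ℕ → ℝ) :
    (∑ k : Fin m, if (k : ℕ) < (r : ℕ) then g k else 0) = ∑ t ∈ Finset.range r, g t := by
  rw [Fin.sum_univ_eq_sum_range (fun k => if k < (r : ℕ) then g k else 0) m]
  exact sum_range_ite g (le_of_lt r.isLt)

lemma lhat_dot_vv (m : ℕ) (i r : Fin m) :
    ∑ k : Fin m, highamLhat m r k * vv i k = if r = i then 1 else 0 := by
  have h1 : ∀ k : Fin m, highamLhat m r k * vv (i : ℕ) (k : ℕ)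
      = (if r = k then vv i k else 0) - (if (k : ℕ) < (r : ℕ) then vv i k else 0) := by
    intro k
    simp only [highamLhat, Matrix.of_apply, Fin.lt_def, Fin.ext_iff]
    split_ifs <;> first | (exfalso; omega) | ring1
  simp only [h1]
  rw [Finset.sum_sub_distrib, Finset.sum_ite_eq Finset.univ r (fun k : Fin m => vv i k),
    if_pos (Finset.mem_univ r), lhat_sum_lt m r (vv i), vv_sum]
  simp only [vv, Fin.ext_iff]
  split_ifs <;> first | (exfalso; omega) | ring1

lemma vv_total (m : ℕ) (i : Fin m) :
    ∑ k : Fin m, vv i k = 2 ^ (m - 1 - (i : ℕ)) := by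
  rw [Fin.sum_univ_eq_sum_range (fun k => vv i k) m, vv_sum,
    if_neg (by have := i.isLt; omega)]
  congr 1
  omega

/- ### block matrices -/

noncomputable def BB (m : ℕ) : Matrix (Fin m ⊕ Fin 1) (Fin m ⊕ Fin 1) ℝ :=
  Matrix.fromBlocks (highamLhat m) 0 (Matrix.of fun (_ : Fin 1) (_ : Fin m) => (-1 : ℝ))
    (Matrix.of fun (_ : Fin 1) (_ : Fin 1) => (1 : ℝ))

noncomputable def CC (m : ℕ) (Uhat : Matrix (Fin m) (Fin m) ℝ) :
    Matrix (Fin m ⊕ Fin 1) (Fin m ⊕ Fin 1) ℝ :=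
  Matrix.fromBlocks Uhat (Matrix.of fun (k : Fin m) (_ : Fin 1) => (2 : ℝ) ^ (k : ℕ)) 0
    (Matrix.of fun (_ : Fin 1) (_ : Fin 1) => (2 : ℝ) ^ m)

lemma highamA_eq {m : ℕ} (Uhat : Matrix (Fin m) (Fin m) ℝ) :
    highamA Uhat = Matrix.reindex finSumFinEquiv finSumFinEquiv (BB m * CC m Uhat) := rfl

lemma det_BB (m : ℕ) : (BB m).det = 1 := by
  rw [BB, Matrix.det_fromBlocks_zero₁₂, det_lhat, Matrix.det_fin_one]
  simp

lemma det_perturb {m : ℕ} (Uhat : Matrix (Fin m) (Fin m) ℝ) (ε : ℝ) (p q : Fin (m + 1)) :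
    (highamA Uhat + Matrix.single p q ε).det
      = (BB m * CC m Uhat
          + Matrix.single (finSumFinEquiv.symm p) (finSumFinEquiv.symm q) ε).det := by
  rw [← Matrix.det_submatrix_equiv_self finSumFinEquiv.symm
    (BB m * CC m Uhat + Matrix.single (finSumFinEquiv.symm p) (finSumFinEquiv.symm q) ε)]
  congr 1
  ext a b
  simp only [highamA_eq, Matrix.reindex_apply, Matrix.add_apply, Matrix.submatrix_apply,
    Matrix.single, Matrix.of_apply]
  congr 1
  simp

lemma subdet {m : ℕ} (Uhat : Matrix (Fin m) (Fin m) ℝ) (ε : ℝ) (p q : Fin (m + 1))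
    (hpq : p = Fin.last m ∨ q = Fin.last m) :
    ((highamA Uhat + Matrix.single p q ε).submatrix
        Fin.castSucc Fin.castSucc).det = Uhat.det := by
  have heq : (highamA Uhat + Matrix.single p q ε).submatrix Fin.castSucc Fin.castSucc
      = highamLhat m * Uhat := by
    ext i k
    have h1 : finSumFinEquiv.symm (Fin.castSucc i) = Sum.inl i :=
      finSumFinEquiv_symm_apply_castAdd i
    have h2 : finSumFinEquiv.symm (Fin.castSucc k) = Sum.inl k :=
      finSumFinEquiv_symm_apply_castAdd k
    have hstd : Matrix.single p q ε i.castSucc k.castSucc = 0 := by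
      simp only [Matrix.single, Matrix.of_apply]
      rcases hpq with hp | hq
      · rw [if_neg]
        rintro ⟨h, -⟩
        exact absurd (hp ▸ h).symm (Fin.castSucc_lt_last i).ne
      · rw [if_neg]
        rintro ⟨-, h⟩
        exact absurd (hq ▸ h).symm (Fin.castSucc_lt_last k).ne
    simp only [Matrix.submatrix_apply, Matrix.add_apply, hstd, add_zero, highamA_eq,
      Matrix.reindex_apply, h1, h2, Matrix.fromBlocks_multiply, BB, CC,
      Matrix.fromBlocks_apply₁₁, Matrix.add_apply]
    simp
  rw [heq, Matrix.det_mul, det_lhat, one_mul]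

theorem stmt_13 {m : ℕ} (hm : 1 ≤ m)
    (Uhat : Matrix (Fin m) (Fin m) ℝ) (hUhat : IsUpperTri Uhat) (hUdet : IsUnit Uhat.det)
    (ε : ℝ) :
    (∀ i : Fin m, ∀ L' U' : Matrix (Fin (m + 1)) (Fin (m + 1)) ℝ,
        IsLowerUnitri L' → IsUpperTri U' →
        highamA Uhat + Matrix.single i.castSucc (Fin.last m) ε = L' * U' →
        U' (Fin.last m) (Fin.last m)
          = (2 : ℝ) ^ m * (1 + ε * ((2 : ℝ) ^ ((i : ℕ) + 1))⁻¹)) ∧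
      (∀ j : Fin m, ∀ L' U' : Matrix (Fin (m + 1)) (Fin (m + 1)) ℝ,
        IsLowerUnitri L' → IsUpperTri U' →
        highamA Uhat + Matrix.single (Fin.last m) j.castSucc ε = L' * U' →
        U' (Fin.last m) (Fin.last m)
          = (2 : ℝ) ^ m * (1 - ε *
              (∑ l ∈ (Finset.Icc 1 (m - (j : ℕ))).attach,
            ((2 : ℝ) ^ (l : ℕ))⁻¹ *
              Uhat⁻¹ j ⟨m - (l : ℕ), by have := Finset.mem_Icc.mp l.2; omega⟩))) ∧
      (∀ L' U' : Matrix (Fin (m + 1)) (Fin (m + 1)) ℝ,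
        IsLowerUnitri L' → IsUpperTri U' →
        highamA Uhat + Matrix.single (Fin.last m) (Fin.last m) ε = L' * U' →
        U' (Fin.last m) (Fin.last m) = (2 : ℝ) ^ m + ε) := by
  have hUne : Uhat.det ≠ 0 := hUdet.ne_zero
  have h2m : (2 : ℝ) ^ m ≠ 0 := by positivity
  refine ⟨?_, ?_, ?_⟩
  · -- case (a)
    intro i L' U' hL hU h
    set M := highamA Uhat + Matrix.single i.castSucc (Fin.last m) ε with hM
    have hdetM : M.det = Uhat.det * ((2 : ℝ) ^ m * (1 + ε * ((2 : ℝ) ^ ((i : ℕ) + 1))⁻¹)) := by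
      rw [hM, det_perturb, finSumFinEquiv_symm_last, (by exact finSumFinEquiv_symm_apply_castAdd i :
        finSumFinEquiv.symm i.castSucc = Sum.inl i)]
      have key : BB m * CC m Uhat + Matrix.single (Sum.inl i) (Sum.inr 0) ε
          = BB m * Matrix.fromBlocks Uhat
              (Matrix.of fun (k : Fin m) (_ : Fin 1) => (2 : ℝ) ^ (k : ℕ) + ε * vv i k) 0
              (Matrix.of fun (_ : Fin 1) (_ : Fin 1) =>
                (2 : ℝ) ^ m + ε * 2 ^ (m - 1 - (i : ℕ))) := by
        simp only [BB, CC, Matrix.fromBlocks_multiply]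
        ext a b
        rcases a with a | a <;> rcases b with b | b <;>
          simp only [Matrix.add_apply, Matrix.fromBlocks_apply₁₁, Matrix.fromBlocks_apply₁₂,
            Matrix.fromBlocks_apply₂₁, Matrix.fromBlocks_apply₂₂, Matrix.single,
            Matrix.of_apply, Matrix.mul_apply, Matrix.zero_apply]
        · simp
        · -- (inl a, inr b)
          have : ∀ k : Fin m, highamLhat m a k * ((2:ℝ) ^ (k:ℕ) + ε * vv i k)
              = highamLhat m a k * (2:ℝ) ^ (k:ℕ) + ε * (highamLhat m a k * vv i k) := by
            intro k; ring
          simp only [this, Finset.sum_add_distrib, ← Finset.mul_sum, lhat_dot_vv]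
          simp only [Sum.inl.injEq, Sum.inr.injEq]
          have hb : b = 0 := Subsingleton.elim _ _
          subst hb
          by_cases hai : a = i
          · subst hai; simp
          · have hia : ¬ i = a := fun hh => hai hh.symm
            simp [hai, hia]
        · simp
        · -- (inr a, inr b)
          have : ∀ k : Fin m, (-1 : ℝ) * ((2:ℝ) ^ (k:ℕ) + ε * vv i k)
              = (-1 : ℝ) * (2:ℝ) ^ (k:ℕ) + (-ε) * vv i k := by
            intro k; ring
          simp only [this, Finset.sum_add_distrib, ← Finset.mul_sum, vv_total]
          simp
          ring
      rw [key, Matrix.det_mul, det_BB, one_mul, Matrix.det_fromBlocks_zero₂₁,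
        Matrix.det_fin_one]
      have hpow : ε * (2 : ℝ) ^ (m - 1 - (i : ℕ)) = (2 : ℝ) ^ m * (ε * ((2 : ℝ) ^ ((i : ℕ) + 1))⁻¹) := by
        have hle : (i : ℕ) + 1 ≤ m := i.isLt
        have h1 : (2 : ℝ) ^ m * ((2 : ℝ) ^ ((i : ℕ) + 1))⁻¹ = 2 ^ (m - 1 - (i : ℕ)) := by
          rw [show m - 1 - (i : ℕ) = m - ((i : ℕ) + 1) by omega,
            pow_sub₀ (2 : ℝ) (by norm_num) hle]
        rw [← h1]
        ring
      rw [Matrix.of_apply, hpow]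
      ring
    have hp := pivot_unique M L' U' hL hU h
    rw [subdet Uhat ε _ _ (Or.inr rfl), hdetM] at hp
    exact (mul_left_cancel₀ hUne hp).symm
  · -- case (b)
    intro j L' U' hL hU h
    set M := highamA Uhat + Matrix.single (Fin.last m) j.castSucc ε with hM
    haveI := Uhat.invertibleOfIsUnitDet hUdet
    have hUinv_tri : ∀ a b : Fin m, b < a → Uhat⁻¹ a b = 0 := by
      have htri : (Uhat⁻¹).BlockTriangular id :=
        Matrix.blockTriangular_inv_of_blockTriangular (fun a b hab => hUhat a b hab)
      exact fun a b hab => htri hab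
    have hinv : Uhat⁻¹ * Uhat = 1 := Matrix.nonsing_inv_mul Uhat hUdet
    set S : ℝ := ∑ k : Fin m, (2 : ℝ) ^ (k : ℕ) * Uhat⁻¹ j k with hS
    have hfil : S = ∑ k ∈ Finset.univ.filter (fun k : Fin m => (j : ℕ) ≤ (k : ℕ)),
        (2 : ℝ) ^ (k : ℕ) * Uhat⁻¹ j k := by
      rw [hS]
      symm
      apply Finset.sum_subset (Finset.filter_subset _ _)
      intro k _ hk
      have hkj : (k : ℕ) < (j : ℕ) := by
        simp only [Finset.mem_filter, Finset.mem_univ, true_and] at hk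
        omega
      rw [hUinv_tri j k (Fin.lt_def.mpr hkj)]
      ring
    have hST : (∑ l ∈ (Finset.Icc 1 (m - (j : ℕ))).attach,
        ((2 : ℝ) ^ (l : ℕ))⁻¹ *
          Uhat⁻¹ j ⟨m - (l : ℕ), by have := Finset.mem_Icc.mp l.2; omega⟩) * 2 ^ m = S := by
      rw [Finset.sum_mul]
      have hstep : ∀ l ∈ (Finset.Icc 1 (m - (j : ℕ))).attach,
          ((2 : ℝ) ^ (l : ℕ))⁻¹ *
            Uhat⁻¹ j ⟨m - (l : ℕ), by have := Finset.mem_Icc.mp l.2; omega⟩ * 2 ^ m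
          = (2 : ℝ) ^ (m - (l : ℕ)) *
            Uhat⁻¹ j ⟨m - (l : ℕ), by have := Finset.mem_Icc.mp l.2; omega⟩ := by
        intro l _
        have hl := Finset.mem_Icc.mp l.2
        have hlm : (l : ℕ) ≤ m := by have := j.isLt; omega
        rw [pow_sub₀ (2 : ℝ) (by norm_num) hlm]
        ring
      rw [Finset.sum_congr rfl hstep, hfil]
      refine Finset.sum_bij'
        (i := fun a _ => (⟨m - (a : ℕ), by have := Finset.mem_Icc.mp a.2; omega⟩ : Fin m))
        (j := fun k hk => (⟨m - (k : ℕ), by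
          have hk' := (Finset.mem_filter.mp hk).2
          have := k.isLt
          exact Finset.mem_Icc.mpr ⟨by omega, by omega⟩⟩ :
            { x // x ∈ Finset.Icc 1 (m - (j : ℕ)) }))
        ?_ ?_ ?_ ?_ ?_
      · intro a _
        have ha := Finset.mem_Icc.mp a.2
        simp only [Finset.mem_filter, Finset.mem_univ, true_and]
        omega
      · intro k _
        exact Finset.mem_attach _ _
      · intro a _
        have ha := Finset.mem_Icc.mp a.2
        have := j.isLt
        apply Subtype.ext
        simp only
        omega
      · intro k hk
        have hk' := (Finset.mem_filter.mp hk).2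
        have := k.isLt
        apply Fin.ext
        simp only
        omega
      · intro a _
        rfl
    have hdetM : M.det = Uhat.det *
        ((2 : ℝ) ^ m * (1 - ε *
          (∑ l ∈ (Finset.Icc 1 (m - (j : ℕ))).attach,
            ((2 : ℝ) ^ (l : ℕ))⁻¹ *
              Uhat⁻¹ j ⟨m - (l : ℕ), by have := Finset.mem_Icc.mp l.2; omega⟩))) := by
      rw [hM, det_perturb, finSumFinEquiv_symm_last,
        (by exact finSumFinEquiv_symm_apply_castAdd j :
          finSumFinEquiv.symm j.castSucc = Sum.inl j)]
      have key : BB m * CC m Uhat + Matrix.single (Sum.inr 0) (Sum.inl j) ε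
          = Matrix.fromBlocks (highamLhat m) 0
              (Matrix.of fun (_ : Fin 1) (k : Fin m) => -1 + ε * Uhat⁻¹ j k)
              (Matrix.of fun (_ : Fin 1) (_ : Fin 1) =>
                1 - ε * S * ((2 : ℝ) ^ m)⁻¹) * CC m Uhat := by
        simp only [BB, CC, Matrix.fromBlocks_multiply]
        ext a b
        rcases a with a | a <;> rcases b with b | b <;>
          simp only [Matrix.add_apply, Matrix.fromBlocks_apply₁₁, Matrix.fromBlocks_apply₁₂,
            Matrix.fromBlocks_apply₂₁, Matrix.fromBlocks_apply₂₂, Matrix.single,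
            Matrix.of_apply, Matrix.mul_apply, Matrix.zero_apply]
        · simp
        · simp
        · -- (inr a, inl b)
          have hsp : ∀ k : Fin m, (-1 + ε * Uhat⁻¹ j k) * Uhat k b
              = -1 * Uhat k b + ε * (Uhat⁻¹ j k * Uhat k b) := by
            intro k; ring
          simp only [hsp, Finset.sum_add_distrib, ← Finset.mul_sum]
          have hmm : ∑ k : Fin m, Uhat⁻¹ j k * Uhat k b = (1 : Matrix (Fin m) (Fin m) ℝ) j b := by
            rw [← Matrix.mul_apply, hinv]
          rw [hmm, Matrix.one_apply]
          have ha : a = 0 := Subsingleton.elim _ _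
          subst ha
          by_cases hjb : j = b
          · subst hjb; simp
          · simp [hjb]
        · -- (inr a, inr b)
          have hsp : ∀ k : Fin m, (-1 + ε * Uhat⁻¹ j k) * (2 : ℝ) ^ (k : ℕ)
              = -1 * (2 : ℝ) ^ (k : ℕ) + ε * ((2 : ℝ) ^ (k : ℕ) * Uhat⁻¹ j k) := by
            intro k; ring
          simp only [hsp, Finset.sum_add_distrib, ← Finset.mul_sum, ← hS]
          have hcan : ((2 : ℝ) ^ m)⁻¹ * (2 : ℝ) ^ m = 1 := inv_mul_cancel₀ h2m
          simp only [Fin.sum_univ_one]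
          field_simp
          rw [if_neg (by simp)]
          ring
      rw [key, Matrix.det_mul, Matrix.det_fromBlocks_zero₁₂, det_lhat, one_mul,
        Matrix.det_fin_one, Matrix.of_apply, CC, Matrix.det_fromBlocks_zero₂₁,
        Matrix.det_fin_one, Matrix.of_apply]
      rw [← hST]
      field_simp
    have hp := pivot_unique M L' U' hL hU h
    rw [subdet Uhat ε _ _ (Or.inl rfl), hdetM] at hp
    exact (mul_left_cancel₀ hUne hp).symm
  · -- case (c)
    intro L' U' hL hU h
    set M := highamA Uhat + Matrix.single (Fin.last m) (Fin.last m) ε with hM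
    have hdetM : M.det = Uhat.det * ((2 : ℝ) ^ m + ε) := by
      rw [hM, det_perturb, finSumFinEquiv_symm_last]
      have key : BB m * CC m Uhat + Matrix.single (Sum.inr 0) (Sum.inr 0) ε
          = BB m * Matrix.fromBlocks Uhat
              (Matrix.of fun (k : Fin m) (_ : Fin 1) => (2 : ℝ) ^ (k : ℕ)) 0
              (Matrix.of fun (_ : Fin 1) (_ : Fin 1) => (2 : ℝ) ^ m + ε) := by
        simp only [BB, CC, Matrix.fromBlocks_multiply]
        ext a b
        rcases a with a | a <;> rcases b with b | b <;>
          simp only [Matrix.add_apply, Matrix.fromBlocks_apply₁₁, Matrix.fromBlocks_apply₁₂,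
            Matrix.fromBlocks_apply₂₁, Matrix.fromBlocks_apply₂₂, Matrix.single,
            Matrix.of_apply, Matrix.mul_apply, Matrix.zero_apply]
        · simp
        · simp
        · simp
        · have ha : a = 0 := Subsingleton.elim _ _
          have hb : b = 0 := Subsingleton.elim _ _
          subst ha; subst hb
          simp
          ring
      rw [key, Matrix.det_mul, det_BB, one_mul, Matrix.det_fromBlocks_zero₂₁,
        Matrix.det_fin_one, Matrix.of_apply]
    have hp := pivot_unique M L' U' hL hU h
    rw [subdet Uhat ε _ _ (Or.inr rfl), hdetM] at hp
    exact (mul_left_cancel₀ hUne hp).symm
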